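/- arXiv:2311.00473 — 2 statements merged into one kernel-verified Lean document; each statement's English description precedes it below -/
import Mathlib

section
/- For every word w in the letters e₀, e₁ (possibly empty), the following identity holds in H[[s,t]]: ((1+e₀t)^{−1}·e₁·w ⧢ (1−e₀s)^{−1})·e₁ = (1−e₀s)^{−1} ⧢ ((1+e₀t)^{−1}·e₁·w·e₁·(1+e₀s)^{−1}). -/
/- STATEMENT 7: for every word w in e₀,e₁,
((1+e₀t)⁻¹ e₁ w ⧢ (1-e₀s)⁻¹)·e₁ = (1-e₀s)⁻¹ ⧢ ((1+e₀t)⁻¹ e₁ w e₁ (1+e₀s)⁻¹)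
in H[[s,t]], realized as H[[t]][[s]] (inner variable t, outer variable s). -/

noncomputable section

abbrev H : Type := FreeAlgebra ℚ (Fin 2)

def e0 : H := FreeAlgebra.ι ℚ 0
def e1 : H := FreeAlgebra.ι ℚ 1

/-- The word `e_{a₁}⋯e_{a_N}` of a list of letters. -/
def word (l : List (Fin 2)) : H := (l.map (FreeAlgebra.ι ℚ)).prod

/-- `H[[t]]`. -/
abbrev HT : Type := PowerSeries H
/-- `H[[s,t]] = H[[t]][[s]]`. -/
abbrev HST : Type := PowerSeries HT

/-- Embedding of `H` into `H[[s,t]]`. -/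
def embB (x : H) : HST := PowerSeries.C (R := HT) (PowerSeries.C (R := H) x)

/-- Coefficientwise (Cauchy) extension of a bilinear product on `H` to `H[[t]]`. -/
def extT (sh : H →ₗ[ℚ] H →ₗ[ℚ] H) (f g : HT) : HT :=
  PowerSeries.mk fun n => ∑ p ∈ Finset.HasAntidiagonal.antidiagonal n,
    sh (PowerSeries.coeff (R := H) p.1 f) (PowerSeries.coeff (R := H) p.2 g)

/-- Coefficientwise (Cauchy) extension of a bilinear product on `H` to `H[[s,t]]`. -/
def extST (sh : H →ₗ[ℚ] H →ₗ[ℚ] H) (f g : HST) : HST :=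
  PowerSeries.mk fun n => ∑ p ∈ Finset.HasAntidiagonal.antidiagonal n,
    extT sh (PowerSeries.coeff (R := HT) p.1 f) (PowerSeries.coeff (R := HT) p.2 g)

/-- `(1 + e₀ t)⁻¹ = ∑_n (-1)ⁿ e₀ⁿ tⁿ` in `H[[s,t]]`. -/
def invOnePlusE0T : HST := PowerSeries.C (R := HT) (PowerSeries.mk fun n => (-1 : H) ^ n * e0 ^ n)
/-- `(1 - e₀ s)⁻¹ = ∑_n e₀ⁿ sⁿ` in `H[[s,t]]`. -/
def invOneMinusE0S : HST := PowerSeries.mk fun n => PowerSeries.C (R := H) (e0 ^ n)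
/-- `(1 + e₀ s)⁻¹ = ∑_n (-1)ⁿ e₀ⁿ sⁿ` in `H[[s,t]]`. -/
def invOnePlusE0S : HST := PowerSeries.mk fun n => PowerSeries.C (R := H) ((-1 : H) ^ n * e0 ^ n)

/-! Comparing coefficients of `sⁿ tᵐ`, with `x = (-e₀)ᵐ e₁ w` the coefficient of `tᵐ` in
`(1 + e₀t)⁻¹ e₁ w`, the identity reads `(x ⧢ e₀ⁿ) e₁ = ∑_{p+q=n} e₀ᵖ ⧢ x e₁ (-e₀)^q`.
Since `⧢` is commutative, this is the case `eᵢ = e₁` of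
`∑_{p+q=n} e₀ᵖ ⧢ x eᵢ (-e₀)^q = (e₀ⁿ ⧢ x) eᵢ`, which holds for every word `x` and letter `eᵢ`
by induction on `n`: the shuffle recursion splits the term `q = 0` into
`(e₀ⁿ ⧢ x) eᵢ + (e₀ⁿ⁻¹ ⧢ x eᵢ) e₀`, while the terms with `q ≥ 1` add up to `-(e₀ⁿ⁻¹ ⧢ x eᵢ) e₀`
by the induction hypothesis for the word `x eᵢ` and the letter `e₀`. -/

open PowerSeries Finset

lemma word_nil : word [] = 1 := rfl

lemma word_append (l l' : List (Fin 2)) : word (l ++ l') = word l * word l' := by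
  simp [word]

lemma word_concat (l : List (Fin 2)) (i : Fin 2) :
    word (l ++ [i]) = word l * FreeAlgebra.ι ℚ i := by
  simp [word]

lemma word_cons (i : Fin 2) (l : List (Fin 2)) : word (i :: l) = FreeAlgebra.ι ℚ i * word l := by
  simp [word]

lemma word_replicate_zero (n : ℕ) : word (List.replicate n 0) = e0 ^ n := by
  simp [word, e0, List.map_replicate]

lemma ι_zero : FreeAlgebra.ι ℚ (0 : Fin 2) = e0 := rfl

lemma ι_one : FreeAlgebra.ι ℚ (1 : Fin 2) = e1 := rfl

section Shuffle

variable {sh : H →ₗ[ℚ] H →ₗ[ℚ] H}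
  (hOneL : ∀ l : List (Fin 2), sh (word []) (word l) = word l)
  (hOneR : ∀ l : List (Fin 2), sh (word l) (word []) = word l)
  (hRec : ∀ (l l' : List (Fin 2)) (i j : Fin 2),
      sh (word (l ++ [i])) (word (l' ++ [j])) =
        sh (word (l ++ [i])) (word l') * FreeAlgebra.ι ℚ j
        + sh (word l) (word (l' ++ [j])) * FreeAlgebra.ι ℚ i)

include hOneL hOneR hRec in
lemma shuffle_word_comm (l l' : List (Fin 2)) : sh (word l) (word l') = sh (word l') (word l) := by
  induction l using List.reverseRecOn generalizing l' with
  | nil => rw [hOneL, hOneR]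
  | append_singleton a i ih =>
    induction l' using List.reverseRecOn with
    | nil => rw [hOneL, hOneR]
    | append_singleton b j ih' => rw [hRec, hRec b a j i, ih', ih, add_comm]

include hOneL hRec in
lemma sum_antidiagonal_shuffle_pow_e0 (n : ℕ) (u : List (Fin 2)) (i : Fin 2) :
    ∑ p ∈ antidiagonal n, sh (e0 ^ p.1) (word u * FreeAlgebra.ι ℚ i * (-e0) ^ p.2)
      = sh (e0 ^ n) (word u) * FreeAlgebra.ι ℚ i := by
  induction n generalizing u i with
  | zero =>
    rw [Nat.antidiagonal_zero, sum_singleton, pow_zero, pow_zero, mul_one, ← word_concat,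
      ← word_nil, hOneL, hOneL, word_concat]
  | succ n ih =>
    have htail :
        ∑ p ∈ antidiagonal n, sh (e0 ^ p.1) (word u * FreeAlgebra.ι ℚ i * (-e0) ^ (p.2 + 1))
          = -(sh (e0 ^ n) (word u * FreeAlgebra.ι ℚ i) * FreeAlgebra.ι ℚ 0) := by
      rw [← word_concat, ← ih, ← sum_neg_distrib]
      refine sum_congr rfl fun p _ => ?_
      rw [pow_succ', ← map_neg, ι_zero]
      congr 1
      noncomm_ring
    have hlast := hRec (List.replicate n 0) u 0 i
    rw [word_concat, word_concat, word_replicate_zero, ι_zero] at hlast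
    rw [Nat.sum_antidiagonal_succ', htail, pow_zero, mul_one, pow_succ, hlast, ι_zero]
    abel

include hOneL hOneR hRec in
lemma shuffle_word_pow_e0_mul_ι (u : List (Fin 2)) (i : Fin 2) (n : ℕ) :
    sh (word u) (e0 ^ n) * FreeAlgebra.ι ℚ i
      = ∑ p ∈ antidiagonal n, sh (e0 ^ p.1) (word u * FreeAlgebra.ι ℚ i * (-e0) ^ p.2) := by
  rw [sum_antidiagonal_shuffle_pow_e0 hOneL hRec, ← word_replicate_zero,
    shuffle_word_comm hOneL hOneR hRec]

end Shuffle

section Coefficients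

variable {R S M : Type*} [Semiring R] [Semiring S] [AddCommMonoid M]

lemma sum_antidiagonal_coeff_C_left (B : R → S → M) (hB : ∀ y, B 0 y = 0) (a : R) (g : S⟦X⟧)
    (n : ℕ) : ∑ p ∈ antidiagonal n, B (coeff p.1 (C a)) (coeff p.2 g) = B a (coeff n g) := by
  rw [sum_eq_single_of_mem (0, n) (by simp)]
  · rw [coeff_zero_C]
  · rintro ⟨k, l⟩ hkl hne
    have hk : k ≠ 0 := by rintro rfl; simp_all
    rw [coeff_C, if_neg hk, hB]

lemma sum_antidiagonal_coeff_C_right (B : R → S → M) (hB : ∀ x, B x 0 = 0) (f : R⟦X⟧) (b : S)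
    (n : ℕ) : ∑ p ∈ antidiagonal n, B (coeff p.1 f) (coeff p.2 (C b)) = B (coeff n f) b := by
  rw [← Nat.sum_antidiagonal_swap]
  exact sum_antidiagonal_coeff_C_left (fun y x => B x y) hB b f n

end Coefficients

section Extension

variable (sh : H →ₗ[ℚ] H →ₗ[ℚ] H)

lemma extT_zero_left (g : HT) : extT sh 0 g = 0 := by
  ext n
  simp [extT]

lemma coeff_extT_C_left (x : H) (g : HT) (n : ℕ) :
    coeff n (extT sh (C x) g) = sh x (coeff n g) := by
  rw [extT, coeff_mk]
  exact sum_antidiagonal_coeff_C_left (fun x y => sh x y) (by simp) x g n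

lemma coeff_extT_C_right (f : HT) (y : H) (n : ℕ) :
    coeff n (extT sh f (C y)) = sh (coeff n f) y := by
  rw [extT, coeff_mk]
  exact sum_antidiagonal_coeff_C_right (fun x y => sh x y) (by simp) f y n

lemma coeff_extST (f g : HST) (n : ℕ) :
    coeff n (extST sh f g) = ∑ p ∈ antidiagonal n, extT sh (coeff p.1 f) (coeff p.2 g) :=
  coeff_mk _ _

lemma coeff_extST_C_left (F : HT) (g : HST) (n : ℕ) :
    coeff n (extST sh (C F) g) = extT sh F (coeff n g) := by
  rw [coeff_extST]
  exact sum_antidiagonal_coeff_C_left (extT sh) (extT_zero_left sh) F g n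

end Extension

theorem stmt_7
    (sh : H →ₗ[ℚ] H →ₗ[ℚ] H)
    (hOneL : ∀ l : List (Fin 2), sh (word []) (word l) = word l)
    (hOneR : ∀ l : List (Fin 2), sh (word l) (word []) = word l)
    (hRec : ∀ (l l' : List (Fin 2)) (i j : Fin 2),
      sh (word (l ++ [i])) (word (l' ++ [j])) =
        sh (word (l ++ [i])) (word l') * FreeAlgebra.ι ℚ j
        + sh (word l) (word (l' ++ [j])) * FreeAlgebra.ι ℚ i) :
    ∀ l : List (Fin 2),
      extST sh (invOnePlusE0T * embB e1 * embB (word l)) invOneMinusE0S * embB e1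
        = extST sh invOneMinusE0S
            (invOnePlusE0T * embB e1 * embB (word l) * embB e1 * invOnePlusE0S) := by
  intro l
  set a : ℕ → H := fun m => ((-1 : ℚ) ^ m) • word (List.replicate m 0 ++ 1 :: l) with ha
  have hprefix : invOnePlusE0T * embB e1 * embB (word l) = C (mk a) := by
    rw [invOnePlusE0T, embB, embB, ← map_mul, ← map_mul]
    congr 1
    ext m
    rw [coeff_mul_C, coeff_mul_C, coeff_mk, coeff_mk]
    simp only [ha, word_append, word_cons, word_replicate_zero, ι_one,
      Algebra.smul_def, map_pow, map_neg, map_one, mul_assoc]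
  ext n m
  calc coeff m (coeff n
          (extST sh (invOnePlusE0T * embB e1 * embB (word l)) invOneMinusE0S * embB e1))
      = sh (a m) (e0 ^ n) * e1 := by
        rw [hprefix, embB, coeff_mul_C, coeff_mul_C, coeff_extST_C_left, invOneMinusE0S, coeff_mk,
          coeff_extT_C_right, coeff_mk]
    _ = ∑ p ∈ antidiagonal n, sh (e0 ^ p.1) (a m * e1 * (-e0) ^ p.2) := by
        rw [map_smul, LinearMap.smul_apply, smul_mul_assoc, ← ι_one,
          shuffle_word_pow_e0_mul_ι hOneL hOneR hRec, smul_sum]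
        simp only [ha, smul_mul_assoc, map_smul]
    _ = _ := by
        rw [hprefix, embB, ← map_mul, coeff_extST, map_sum]
        refine sum_congr rfl fun p _ => ?_
        rw [invOneMinusE0S, coeff_mk, coeff_C_mul, invOnePlusE0S, coeff_mk, coeff_extT_C_left,
          coeff_mul_C, coeff_mul_C, coeff_mk, neg_pow]
end
end

section
/- For every τ ∈ ℚ one has S^τ ∘ L^{s,t,τ} = L^{s,t,0} ∘ S^τ as ℚ-linear maps H → H[[s,t]]. Here S^τ is the ℚ-algebra endomorphism of H with S^τ(e₀) = e₀, S^τ(e₁) = e₁ + τe₀ (extended coefficientwise to H[[s,t]]); A^τ is the ℚ-algebra endomorphism of H with A^τ(e₀) = e₀, A^τ(e₁) = τe₀; H is the ℚ-linear endomorphism of H defined on words by H(1) = 0, H(e₀·w) = 0 and H(e₁·w) = w; and L^{s,t,τ} : H → H[[s,t]] is the ℚ-linear map L^{s,t,τ}(w) = w − A^τ(w) − ∑_{j≥0} e₀^j·(e₁ + (1−τ)e₀)·H(w)·t^j − ∑_{j≥0} H(w)·(e₁ + (1−τ)e₀)·e₀^j·s^j. -/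
/- STATEMENT 10: S^τ ∘ L^{s,t,τ} = L^{s,t,0} ∘ S^τ : H → H[[s,t]], where
S^τ(e₀)=e₀, S^τ(e₁)=e₁+τe₀; A^τ(e₀)=e₀, A^τ(e₁)=τe₀; H(1)=0, H(e₀w)=0, H(e₁w)=w; and
L^{s,t,τ}(w) = w − A^τ(w) − ∑_j e₀^j (e₁+(1−τ)e₀) H(w) t^j − ∑_j H(w)(e₁+(1−τ)e₀) e₀^j s^j.
H[[s,t]] is realized as H[[t]][[s]] (inner variable t, outer variable s). -/

noncomputable section

/-- The ℚ-algebra endomorphism `S^τ` of `H`: `e₀ ↦ e₀`, `e₁ ↦ e₁ + τ e₀`. -/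
def Stau (τ : ℚ) : H →ₐ[ℚ] H :=
  FreeAlgebra.lift ℚ (fun i : Fin 2 => if i = 0 then e0 else e1 + τ • e0)

/-- The ℚ-algebra endomorphism `A^τ` of `H`: `e₀ ↦ e₀`, `e₁ ↦ τ e₀`. -/
def Atau (τ : ℚ) : H →ₐ[ℚ] H :=
  FreeAlgebra.lift ℚ (fun i : Fin 2 => if i = 0 then e0 else τ • e0)

/-- The coefficientwise extension of `S^τ` to `H[[s,t]]`. -/
def StauST (τ : ℚ) : HST →+* HST :=
  PowerSeries.map (PowerSeries.map (Stau τ).toRingHom)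

/-- The map `L^{s,t,τ}`, built from a linear map `HH` playing the role of `H`. -/
def Lstt (HH : H →ₗ[ℚ] H) (τ : ℚ) (w : H) : HST :=
  embB w - embB (Atau τ w)
    - PowerSeries.C (R := HT) (PowerSeries.mk fun j => e0 ^ j * (e1 + (1 - τ) • e0) * HH w)
    - PowerSeries.mk (fun j => PowerSeries.C (R := H) (HH w * (e1 + (1 - τ) • e0) * e0 ^ j))


/-! `S^τ` commutes with every ingredient of `L^{s,t,τ}` separately: it fixes `e₀`, it sends the
letter `e₁ + (1 - τ)e₀` to `e₁ + e₀`, it intertwines `A^τ` with `A^0` (both composites send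
`e₁ ↦ τe₀`), and it commutes with `H`, because `S^τ(e₁w) = e₁S^τ(w) + τe₀S^τ(w)` and `H` kills the
second summand. Comparing `S^τ ∘ L^{s,t,τ}` and `L^{s,t,0} ∘ S^τ` coefficientwise then gives the
identity. -/

theorem FreeAlgebra.exists_eq_algebraMap_add_sum_ι_mul {R X : Type*} [CommRing R] [Fintype X]
    (x : FreeAlgebra R X) :
    ∃ (c : R) (a : X → FreeAlgebra R X), x = algebraMap R _ c + ∑ i, ι R i * a i := by
  classical
  induction x using FreeAlgebra.induction with
  | grade0 r => exact ⟨r, 0, by simp⟩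
  | grade1 i => exact ⟨0, Pi.single i 1, by simp [Pi.single_apply, mul_ite]⟩
  | mul x y hx hy =>
    obtain ⟨c, a, rfl⟩ := hx
    obtain ⟨c', a', hy⟩ := hy
    refine ⟨c * c', fun i => c • a' i + a i * y, ?_⟩
    rw [add_mul, Finset.sum_mul, ← Algebra.smul_def]
    nth_rewrite 1 [hy]
    simp only [smul_add, Finset.smul_sum, mul_add, Finset.sum_add_distrib, mul_smul_comm,
      mul_assoc, Algebra.smul_def c (algebraMap R _ c'), map_mul]
    abel
  | add x y hx hy =>
    obtain ⟨c, a, rfl⟩ := hx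
    obtain ⟨c', a', rfl⟩ := hy
    refine ⟨c + c', a + a', ?_⟩
    simp only [map_add, Pi.add_apply, mul_add, Finset.sum_add_distrib]
    abel

lemma exists_eq_algebraMap_add_e0_mul_add_e1_mul (x : H) :
    ∃ c a b, x = algebraMap ℚ H c + e0 * a + e1 * b := by
  obtain ⟨c, a, rfl⟩ := FreeAlgebra.exists_eq_algebraMap_add_sum_ι_mul x
  exact ⟨c, a 0, a 1, by rw [Fin.sum_univ_two, ← add_assoc]; rfl⟩

lemma Stau_e0 (τ : ℚ) : Stau τ e0 = e0 := by
  simp [Stau, e0]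

lemma Stau_e1 (τ : ℚ) : Stau τ e1 = e1 + τ • e0 := by
  simp [Stau, e1]

lemma Stau_e1_add_smul_e0 (τ σ : ℚ) : Stau τ (e1 + σ • e0) = e1 + (σ + τ) • e0 := by
  rw [map_add, map_smul, Stau_e1, Stau_e0, add_smul, add_comm (σ • e0), add_assoc]

lemma Atau_zero_comp_Stau (τ : ℚ) : (Atau 0).comp (Stau τ) = (Stau τ).comp (Atau τ) := by
  apply FreeAlgebra.hom_ext
  funext i
  fin_cases i <;> simp [Atau, Stau, e0, e1]

lemma apply_Stau_eq_Stau_apply {HH : H →ₗ[ℚ] H} (hH1 : HH 1 = 0)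
    (hH0 : ∀ w : H, HH (e0 * w) = 0) (hHe1 : ∀ w : H, HH (e1 * w) = w) (τ : ℚ) (x : H) :
    HH (Stau τ x) = Stau τ (HH x) := by
  have hHH (c : ℚ) (a b : H) : HH (algebraMap ℚ H c + e0 * a + e1 * b) = b := by
    rw [map_add, map_add, Algebra.algebraMap_eq_smul_one, map_smul, hH1, smul_zero, hH0, hHe1,
      zero_add, zero_add]
  obtain ⟨c, a, b, rfl⟩ := exists_eq_algebraMap_add_e0_mul_add_e1_mul x
  have hS : Stau τ (algebraMap ℚ H c + e0 * a + e1 * b)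
      = algebraMap ℚ H c + e0 * (Stau τ a + τ • Stau τ b) + e1 * Stau τ b := by
    simp only [map_add, map_mul, Stau_e0, Stau_e1, AlgHom.commutes, add_mul, mul_add,
      smul_mul_assoc, mul_smul_comm]
    abel
  rw [hS, hHH, hHH]

lemma StauST_embB (τ : ℚ) (w : H) : StauST τ (embB w) = embB (Stau τ w) := by
  simp [StauST, embB]

lemma StauST_C_mk (τ : ℚ) (f : ℕ → H) :
    StauST τ (PowerSeries.C (PowerSeries.mk f)) =
      PowerSeries.C (PowerSeries.mk fun j => Stau τ (f j)) := by
  rw [StauST, PowerSeries.map_C]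
  congr 1

lemma StauST_mk_C (τ : ℚ) (g : ℕ → H) :
    StauST τ (PowerSeries.mk fun j => PowerSeries.C (g j)) =
      PowerSeries.mk fun j => PowerSeries.C (Stau τ (g j)) := by
  ext n
  simp [StauST]

theorem stmt_10 (τ : ℚ)
    (HH : H →ₗ[ℚ] H)
    (hH1 : HH 1 = 0)
    (hH0 : ∀ w : H, HH (e0 * w) = 0)
    (hHe1 : ∀ w : H, HH (e1 * w) = w) :
    ∀ x : H, StauST τ (Lstt HH τ x) = Lstt HH 0 (Stau τ x) := by
  intro x
  have hHx : HH (Stau τ x) = Stau τ (HH x) := apply_Stau_eq_Stau_apply hH1 hH0 hHe1 τ x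
  have hletter : Stau τ (e1 + (1 - τ) • e0) = e1 + (1 - (0 : ℚ)) • e0 := by
    rw [Stau_e1_add_smul_e0, sub_add_cancel, sub_zero]
  have hA : Atau 0 (Stau τ x) = Stau τ (Atau τ x) :=
    DFunLike.congr_fun (Atau_zero_comp_Stau τ) x
  rw [Lstt, Lstt, map_sub, map_sub, map_sub, StauST_embB, StauST_embB, StauST_C_mk, StauST_mk_C,
    hA]
  simp only [hHx, map_mul, map_pow, Stau_e0, hletter]
end
end
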